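/- arXiv:2402.17720 — 2 statements merged into one kernel-verified Lean document; each statement's English description precedes it below -/
import Mathlib

section
/- Regret of SMART with deterministic threshold: in the general online learning setting with 0 ≤ ℓ_t(a) ≤ 1 for all t and a, let g : ℕ → ℝ be monotone nondecreasing with g(k) ≥ 0 for all k. Set θ := g(n) and t_sw := min{1 ≤ t ≤ n−1 : Σ_t > θ}, with t_sw := n if no such t exists. Let (a_1, …, a_n) satisfy a_t = a*_{t−1} for all t ≤ t_sw, and, in case t_sw < n, assume the post-switch actions satisfy the worst-case guarantee ∑_{t=t_sw+1}^n ℓ_t(a_t) − inf_{a∈A} ∑_{t=t_sw+1}^n ℓ_t(a) ≤ g(n − t_sw). Then Reg ≤ 2·min{Σ_n, g(n)} + 1. -/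
/-!
Split the run at the switching round `tsw`. Up to `tsw` the play is FTL, whose regret is
the anytime FTL regret `Sg tsw`; since each increment of `Sg` lies in `[0, 1]` and
`Sg` stays below the threshold `g n` before `tsw`, it overshoots by at most one, so
`Sg tsw ≤ g n + 1`. After the switch, the leader `astar tsw` of the first block and any
comparator on the second block do at least as well as `astar n` on the whole run, so the
total regret is at most `Sg tsw` plus the post-switch regret `g (n - tsw) ≤ g n`. If the
switch happens, `Sg n ≥ Sg tsw > g n`, so the minimum is `g n`; if not, the regret is
`Sg n ≤ g n + 1`.
-/

open Finset

theorem Finset.sum_Icc_one_add_sum_Icc_succ {M : Type*} [AddCommMonoid M] (f : ℕ → M)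
    {m n : ℕ} (h : m ≤ n) :
    ∑ i ∈ Icc 1 m, f i + ∑ i ∈ Icc (m + 1) n, f i = ∑ i ∈ Icc 1 n, f i := by
  simpa only [← Icc_add_one_left_eq_Ioc, zero_add] using
    sum_Ioc_consecutive f (Nat.zero_le m) h

namespace OnlineLearning

variable {A : Type*} (ℓ : ℕ → A → ℝ)

def cumLoss (t : ℕ) (a : A) : ℝ := ∑ i ∈ Icc 1 t, ℓ i a

def IsLeader (t : ℕ) (b : A) : Prop := ∀ a, cumLoss ℓ t b ≤ cumLoss ℓ t a

def ftlRegretIncrement (astar : ℕ → A) (i : ℕ) : ℝ :=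
  cumLoss ℓ i (astar (i - 1)) - cumLoss ℓ i (astar i)

def anytimeFTLRegret (astar : ℕ → A) (t : ℕ) : ℝ :=
  ∑ i ∈ Icc 1 t, ftlRegretIncrement ℓ astar i

variable {ℓ} {astar : ℕ → A}

theorem cumLoss_succ (t : ℕ) (a : A) : cumLoss ℓ (t + 1) a = cumLoss ℓ t a + ℓ (t + 1) a :=
  sum_Icc_succ_top (by omega) _

theorem isLeader_zero (b : A) : IsLeader ℓ 0 b := fun _ => by simp [cumLoss]

theorem anytimeFTLRegret_zero : anytimeFTLRegret ℓ astar 0 = 0 := by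
  simp [anytimeFTLRegret]

theorem anytimeFTLRegret_succ (t : ℕ) :
    anytimeFTLRegret ℓ astar (t + 1) =
      anytimeFTLRegret ℓ astar t + ftlRegretIncrement ℓ astar (t + 1) :=
  sum_Icc_succ_top (by omega) _

theorem ftlRegretIncrement_nonneg {i : ℕ} (h : IsLeader ℓ i (astar i)) :
    0 ≤ ftlRegretIncrement ℓ astar i :=
  sub_nonneg.2 (h _)

theorem ftlRegretIncrement_succ_le {t : ℕ} (h : IsLeader ℓ t (astar t)) :
    ftlRegretIncrement ℓ astar (t + 1) ≤
      ℓ (t + 1) (astar t) - ℓ (t + 1) (astar (t + 1)) := by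
  have := h (astar (t + 1))
  simp only [ftlRegretIncrement, Nat.add_sub_cancel, cumLoss_succ]
  linarith

theorem sum_ftl_eq_anytimeFTLRegret_add_cumLoss (m : ℕ) :
    ∑ t ∈ Icc 1 m, ℓ t (astar (t - 1)) =
      anytimeFTLRegret ℓ astar m + cumLoss ℓ m (astar m) := by
  induction m with
  | zero => simp [anytimeFTLRegret, cumLoss]
  | succ m ih =>
    rw [sum_Icc_succ_top (by omega), ih, anytimeFTLRegret_succ]
    simp only [ftlRegretIncrement, cumLoss_succ, Nat.add_sub_cancel]
    ring

theorem anytimeFTLRegret_nonneg {n : ℕ} (hlead : ∀ t ≤ n, IsLeader ℓ t (astar t)) :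
    0 ≤ anytimeFTLRegret ℓ astar n :=
  sum_nonneg fun i hi => ftlRegretIncrement_nonneg (hlead i (mem_Icc.1 hi).2)

theorem anytimeFTLRegret_le_of_le {s n : ℕ} (hlead : ∀ t ≤ n, IsLeader ℓ t (astar t))
    (hs : s ≤ n) : anytimeFTLRegret ℓ astar s ≤ anytimeFTLRegret ℓ astar n :=
  sum_le_sum_of_subset_of_nonneg (Icc_subset_Icc_right hs) fun i hi _ =>
    ftlRegretIncrement_nonneg (hlead i (mem_Icc.1 hi).2)

theorem anytimeFTLRegret_le_add_one {n s : ℕ} {θ : ℝ}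
    (hℓ : ∀ t ∈ Icc 1 n, ∀ a : A, ℓ t a ∈ Set.Icc (0 : ℝ) 1)
    (hlead : ∀ t ≤ n, IsLeader ℓ t (astar t)) (hs : s ≤ n) (hθ : 0 ≤ θ)
    (hbelow : ∀ t, 1 ≤ t → t < s → anytimeFTLRegret ℓ astar t ≤ θ) :
    anytimeFTLRegret ℓ astar s ≤ θ + 1 := by
  obtain _ | k := s
  · rw [anytimeFTLRegret_zero]
    linarith
  have hk : anytimeFTLRegret ℓ astar k ≤ θ := by
    obtain _ | j := k
    · rwa [anytimeFTLRegret_zero]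
    · exact hbelow _ (by omega) (by omega)
  have hstep : ftlRegretIncrement ℓ astar (k + 1) ≤ 1 := by
    have hℓk := hℓ (k + 1) (mem_Icc.2 ⟨by omega, hs⟩)
    linarith [ftlRegretIncrement_succ_le (hlead k (by omega)), (hℓk (astar k)).2,
      (hℓk (astar (k + 1))).1]
  rw [anytimeFTLRegret_succ]
  linarith

theorem regret_le_anytimeFTLRegret_add_tail_regret {n s : ℕ} {a : ℕ → A}
    (hℓ : ∀ t ∈ Icc (s + 1) n, ∀ a : A, 0 ≤ ℓ t a) (hlead : IsLeader ℓ s (astar s))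
    (hs : s ≤ n) (ha : ∀ t ∈ Icc 1 s, a t = astar (t - 1)) (b : A) :
    ∑ t ∈ Icc 1 n, ℓ t (a t) - ∑ t ∈ Icc 1 n, ℓ t b ≤
      anytimeFTLRegret ℓ astar s +
        (∑ t ∈ Icc (s + 1) n, ℓ t (a t) - ⨅ a' : A, ∑ t ∈ Icc (s + 1) n, ℓ t a') := by
  have hhead :
      ∑ t ∈ Icc 1 s, ℓ t (a t) = anytimeFTLRegret ℓ astar s + cumLoss ℓ s (astar s) := by
    rw [← sum_ftl_eq_anytimeFTLRegret_add_cumLoss]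
    exact sum_congr rfl fun t ht => by rw [ha t ht]
  have hinf : ⨅ a' : A, ∑ t ∈ Icc (s + 1) n, ℓ t a' ≤ ∑ t ∈ Icc (s + 1) n, ℓ t b :=
    ciInf_le ⟨0, by rintro _ ⟨a', rfl⟩; exact sum_nonneg fun t ht => hℓ t ht a'⟩ b
  have hsplit_a := sum_Icc_one_add_sum_Icc_succ (fun t => ℓ t (a t)) hs
  have hsplit_b := sum_Icc_one_add_sum_Icc_succ (fun t => ℓ t b) hs
  have hb := hlead b
  simp only [cumLoss] at *
  linarith

end OnlineLearning

open OnlineLearning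

theorem smart_deterministic_threshold_regret_general
    {A : Type*} (n : ℕ)
    (ℓ : ℕ → A → ℝ)
    (hℓ : ∀ t ∈ Finset.Icc 1 n, ∀ a : A, ℓ t a ∈ Set.Icc (0 : ℝ) 1)
    (astar : ℕ → A)
    (hmin : ∀ t ∈ Finset.Icc 1 n, ∀ a : A,
      ∑ i ∈ Finset.Icc 1 t, ℓ i (astar t) ≤ ∑ i ∈ Finset.Icc 1 t, ℓ i a)
    (Sg : ℕ → ℝ)
    (hSg : ∀ t, Sg t = ∑ i ∈ Finset.Icc 1 t,
        ((∑ j ∈ Finset.Icc 1 i, ℓ j (astar (i - 1))) - ∑ j ∈ Finset.Icc 1 i, ℓ j (astar i)))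
    (g : ℕ → ℝ) (hgmono : Monotone g) (hg0 : ∀ k, 0 ≤ g k)
    (tsw : ℕ) (htsw2 : tsw ≤ n)
    (htsw3 : ∀ t, 1 ≤ t → t < tsw → Sg t ≤ g n)
    (htsw4 : tsw < n → g n < Sg tsw)
    (a : ℕ → A) (ha : ∀ t ∈ Finset.Icc 1 tsw, a t = astar (t - 1))
    (hwc : tsw < n →
      (∑ t ∈ Finset.Icc (tsw + 1) n, ℓ t (a t))
          - (⨅ a' : A, ∑ t ∈ Finset.Icc (tsw + 1) n, ℓ t a')
        ≤ g (n - tsw)) :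
    (∑ t ∈ Finset.Icc 1 n, ℓ t (a t)) - ∑ i ∈ Finset.Icc 1 n, ℓ i (astar n)
      ≤ 2 * min (Sg n) (g n) + 1 := by
  obtain rfl : Sg = anytimeFTLRegret ℓ astar := funext hSg
  have hlead : ∀ t ≤ n, IsLeader ℓ t (astar t) := fun t ht => by
    obtain _ | t := t
    · exact isLeader_zero _
    · exact hmin _ (mem_Icc.2 ⟨by omega, ht⟩)
  have hregret := regret_le_anytimeFTLRegret_add_tail_regret
    (fun t ht a' => (hℓ t (Icc_subset_Icc_left (by omega) ht) a').1) (hlead tsw htsw2) htsw2 ha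
    (astar n)
  have hovershoot := anytimeFTLRegret_le_add_one hℓ hlead htsw2 (hg0 n) htsw3
  obtain rfl | hswitch := htsw2.eq_or_lt
  · have htail : ∑ t ∈ Icc (tsw + 1) tsw, ℓ t (a t) -
        ⨅ a' : A, ∑ t ∈ Icc (tsw + 1) tsw, ℓ t a' = 0 := by
      simp [Real.iInf_const_zero]
    have := anytimeFTLRegret_nonneg hlead
    rw [mul_min_of_nonneg _ _ zero_le_two, ← min_add_add_right]
    exact le_min (by linarith) (by linarith [hg0 tsw])
  · have hmin_eq : min (anytimeFTLRegret ℓ astar n) (g n) = g n :=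
      min_eq_right ((htsw4 hswitch).trans_le (anytimeFTLRegret_le_of_le hlead htsw2)).le
    rw [hmin_eq]
    linarith [hwc hswitch, hgmono (Nat.sub_le n tsw)]

/-- **Regret of SMART with deterministic threshold.** In the general online learning
setting with losses in `[0,1]`, let `g : ℕ → ℝ` be monotone nondecreasing and
nonnegative, set `θ = g n`, and let `tsw` be the first `1 ≤ t ≤ n-1` with `Sg t > g n`
(`tsw = n` if no such `t` exists), where `Sg` is the anytime FTL regret.  If the action
sequence plays FTL up to round `tsw` and, in case `tsw < n`, the post-switch play has
regret at most `g (n - tsw)` on rounds `tsw+1, …, n`, then the total regret is at most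
`2 · min (Sg n) (g n) + 1`. -/
theorem smart_deterministic_threshold_regret
    {A : Type*} [Nonempty A] (n : ℕ) (hn : 1 ≤ n)
    (ℓ : ℕ → A → ℝ)
    (hℓ : ∀ t ∈ Finset.Icc 1 n, ∀ a : A, ℓ t a ∈ Set.Icc (0 : ℝ) 1)
    (astar : ℕ → A)
    (hmin : ∀ t ∈ Finset.Icc 1 n, ∀ a : A,
      ∑ i ∈ Finset.Icc 1 t, ℓ i (astar t) ≤ ∑ i ∈ Finset.Icc 1 t, ℓ i a)
    (Sg : ℕ → ℝ)
    (hSg : ∀ t, Sg t = ∑ i ∈ Finset.Icc 1 t,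
        ((∑ j ∈ Finset.Icc 1 i, ℓ j (astar (i - 1))) - ∑ j ∈ Finset.Icc 1 i, ℓ j (astar i)))
    (g : ℕ → ℝ) (hgmono : Monotone g) (hg0 : ∀ k, 0 ≤ g k)
    (tsw : ℕ) (htsw1 : 1 ≤ tsw) (htsw2 : tsw ≤ n)
    (htsw3 : ∀ t, 1 ≤ t → t < tsw → Sg t ≤ g n)
    (htsw4 : tsw < n → g n < Sg tsw)
    (a : ℕ → A) (ha : ∀ t ∈ Finset.Icc 1 tsw, a t = astar (t - 1))
    (hwc : tsw < n →
      (∑ t ∈ Finset.Icc (tsw + 1) n, ℓ t (a t))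
          - (⨅ a' : A, ∑ t ∈ Finset.Icc (tsw + 1) n, ℓ t a')
        ≤ g (n - tsw)) :
    (∑ t ∈ Finset.Icc 1 n, ℓ t (a t)) - ∑ i ∈ Finset.Icc 1 n, ℓ i (astar n)
      ≤ 2 * min (Sg n) (g n) + 1 :=
  smart_deterministic_threshold_regret_general n ℓ hℓ astar hmin Sg hSg g hgmono hg0 tsw htsw2 htsw3
    htsw4 a ha hwc
end

section
/- Ski-rental bound for the exponential threshold distribution: let r ≥ 0 and g > 0 be real numbers, and define cost : ℝ → ℝ by cost(θ) := θ + g if θ < r and cost(θ) := r if θ ≥ r. Then ∫_0^1 cost(g·ln(1 + (e−1)u)) du ≤ (e/(e−1))·min{r, g}. -/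
/-!
Write `θ(u) = g log (1 + (e - 1) u)`, which increases from `0` to `g` on `[0, 1]`, and let `c ∈ [0, 1]`
be the point where `θ` reaches `min r g`. Below `c` the integrand is `g (log (1 + (e - 1) u) + 1)`,
whose antiderivative is `g (1 + (e - 1) u) log (1 + (e - 1) u) / (e - 1)`; above `c` it is the
constant `r`. Adding the two pieces gives exactly `e / (e - 1) · min r g`.
-/

open MeasureTheory intervalIntegral Real Set
open scoped Interval

theorem one_add_mul_pos_of_mem_uIcc {a c u : ℝ} (ha : 0 ≤ a) (hc : 0 ≤ c) (hu : u ∈ [[0, c]]) :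
    0 < 1 + a * u := by
  rw [uIcc_of_le hc] at hu
  nlinarith [hu.1]

theorem intervalIntegrable_log_one_add_mul {a c : ℝ} (ha : 0 ≤ a) (hc : 0 ≤ c) :
    IntervalIntegrable (fun u => log (1 + a * u)) volume 0 c :=
  ContinuousOn.intervalIntegrable
    (ContinuousOn.log (by fun_prop) fun _ hu => (one_add_mul_pos_of_mem_uIcc ha hc hu).ne')

theorem integral_log_one_add_mul_add_one {a c : ℝ} (ha : 0 < a) (hc : 0 ≤ c) :
    ∫ u in (0 : ℝ)..c, (log (1 + a * u) + 1) = (1 + a * c) * log (1 + a * c) / a := by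
  rw [integral_add (intervalIntegrable_log_one_add_mul ha.le hc) intervalIntegrable_const,
    integral_comp_add_mul (fun x => log x) ha.ne', integral_log]
  simp only [mul_zero, add_zero, log_one, intervalIntegral.integral_const, smul_eq_mul]
  field_simp
  ring

theorem mul_log_one_add_mul_lt_iff {g a u s : ℝ} (hg : 0 < g) (ha : 0 < a) (hu : 0 < 1 + a * u) :
    g * log (1 + a * u) < s ↔ u < (exp (s / g) - 1) / a := by
  rw [mul_comm, ← lt_div_iff₀ hg, log_lt_iff_lt_exp hu, lt_div_iff₀ ha]
  constructor <;> intro h <;> linarith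

theorem integral_ite_lt {φ : ℝ → ℝ} {a b c k : ℝ} (hac : a ≤ c) (hcb : c ≤ b)
    (hφ : IntervalIntegrable φ volume a c) :
    ∫ u in a..b, (if u < c then φ u else k) = (∫ u in a..c, φ u) + (b - c) * k := by
  have below : ∀ᵐ u, u ∈ Ι a c → (if u < c then φ u else k) = φ u := by
    filter_upwards [Measure.ae_ne volume c] with u hne hu
    rw [uIoc_of_le hac] at hu
    exact if_pos (lt_of_le_of_ne hu.2 hne)
  have above : ∀ u ∈ Ι c b, (if u < c then φ u else k) = k := by
    intro u hu
    rw [uIoc_of_le hcb] at hu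
    exact if_neg hu.1.not_gt
  have integrable_below : IntervalIntegrable (fun u => if u < c then φ u else k) volume a c :=
    hφ.congr_ae (Filter.EventuallyEq.symm ((ae_restrict_iff' measurableSet_uIoc).2 below))
  have integrable_above : IntervalIntegrable (fun u => if u < c then φ u else k) volume c b :=
    intervalIntegrable_const.congr_ae
      (Filter.EventuallyEq.symm ((ae_restrict_iff' measurableSet_uIoc).2 (.of_forall above)))
  rw [← integral_add_adjacent_intervals integrable_below integrable_above,
    integral_congr_ae below, integral_congr_ae (.of_forall above), intervalIntegral.integral_const,
    smul_eq_mul]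

/-- Regret of switching to the backup (regret `g`) at threshold `θ`, when following the leader
throughout would incur regret `r`. -/
noncomputable def skiRentalCost (r g θ : ℝ) : ℝ := if θ < r then θ + g else r

section ExponentialThreshold

variable {r g : ℝ}

theorem integral_skiRentalCost_of_le (hr : 0 ≤ r) (hg : 0 < g) (hrg : r ≤ g) :
    ∫ u in (0 : ℝ)..1, skiRentalCost r g (g * log (1 + (exp 1 - 1) * u))
      = exp 1 / (exp 1 - 1) * r := by
  set E := exp 1 - 1 with hE
  have hE0 : 0 < E := sub_pos.2 (one_lt_exp_iff.2 one_pos)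
  set c := (exp (r / g) - 1) / E
  have hc0 : 0 ≤ c :=
    div_nonneg (by linarith [one_le_exp (div_nonneg hr hg.le)]) hE0.le
  have hc1 : c ≤ 1 := by
    rw [div_le_one hE0, hE, sub_le_sub_iff_right, exp_le_exp]
    exact (div_le_one hg).2 hrg
  have hEc : 1 + E * c = exp (r / g) := by simp only [c]; field_simp; ring
  have hthreshold : ∀ u ∈ [[(0 : ℝ), 1]], skiRentalCost r g (g * log (1 + E * u))
      = if u < c then g * (log (1 + E * u) + 1) else r := fun u hu =>
    if_congr (mul_log_one_add_mul_lt_iff hg hE0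
      (one_add_mul_pos_of_mem_uIcc hE0.le zero_le_one hu)) (by ring) rfl
  rw [integral_congr hthreshold, integral_ite_lt hc0 hc1
      ((intervalIntegrable_log_one_add_mul hE0.le hc0).add
        intervalIntegrable_const |>.const_mul g),
    intervalIntegral.integral_const_mul,
    integral_log_one_add_mul_add_one hE0 hc0, hEc, log_exp]
  field_simp
  linear_combination (-r) * hEc + r * hE

theorem integral_skiRentalCost_of_lt (hg : 0 < g) (hgr : g < r) :
    ∫ u in (0 : ℝ)..1, skiRentalCost r g (g * log (1 + (exp 1 - 1) * u))
      = exp 1 / (exp 1 - 1) * g := by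
  set E := exp 1 - 1 with hE
  have hE0 : 0 < E := sub_pos.2 (one_lt_exp_iff.2 one_pos)
  have hlinear : ∀ u ∈ [[(0 : ℝ), 1]],
      skiRentalCost r g (g * log (1 + E * u)) = g * (log (1 + E * u) + 1) := fun u hu => by
    have hu1 : u < (exp (r / g) - 1) / E := by
      rw [lt_div_iff₀ hE0]
      rw [uIcc_of_le zero_le_one] at hu
      have : exp 1 < exp (r / g) := exp_lt_exp.2 ((one_lt_div hg).2 hgr)
      nlinarith [hu.2]
    rw [skiRentalCost, if_pos ((mul_log_one_add_mul_lt_iff hg hE0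
      (one_add_mul_pos_of_mem_uIcc hE0.le zero_le_one hu)).2 hu1)]
    ring
  rw [integral_congr hlinear, intervalIntegral.integral_const_mul,
    integral_log_one_add_mul_add_one hE0 zero_le_one,
    show 1 + E * 1 = exp 1 by rw [hE]; ring, log_exp]
  ring

end ExponentialThreshold

/-- **Ski-rental bound for the exponential threshold distribution.** For `r ≥ 0`,
`g > 0` and `cost θ = θ + g` if `θ < r`, `cost θ = r` otherwise, one has
`∫_0^1 cost (g · ln (1 + (e-1) u)) du ≤ (e/(e-1)) · min r g`. -/
theorem ski_rental_exponential_threshold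
    (r g : ℝ) (hr : 0 ≤ r) (hg : 0 < g)
    (cost : ℝ → ℝ)
    (hcost : ∀ θ : ℝ, cost θ = if θ < r then θ + g else r) :
    (∫ u in (0 : ℝ)..1, cost (g * Real.log (1 + (Real.exp 1 - 1) * u)))
      ≤ Real.exp 1 / (Real.exp 1 - 1) * min r g := by
  obtain rfl : cost = skiRentalCost r g := funext hcost
  refine le_of_eq ?_
  rcases le_or_gt r g with hrg | hgr
  · rw [integral_skiRentalCost_of_le hr hg hrg, min_eq_left hrg]
  · rw [integral_skiRentalCost_of_lt hg hgr, min_eq_right hgr.le]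
end
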